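/- Let n ≥ 3. In the complete graph K_n on vertex set {0,…,n−1}, consider the cuts Δ(X) for all contiguous arcs X of the n-cycle not containing 0 (the beach of the mincuts of the cycle C_n). The characteristic vectors of these cuts in {0,1}^{C(n,2)} span all of ℝ^{C(n,2)}. -/

import Mathlib

/-!
Cut vectors lie in the span of the edge vectors `edgeVec e` (`e` a non-loop), and these are
linearly independent, so it suffices to obtain every edge vector from cuts of arcs avoiding `0`.
For nonzero vertices with `p.val < q.val`, the arcs `A = {p, …, q - 1}` and `B = {p + 1, …, q}`
satisfy `δ(A) + δ(B) - δ(A ∪ B) - δ(A ∩ B) = 2 • e(p, q)`, and `A ∪ B`, `A ∩ B` are again such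
arcs. The edge `e(p, 0)` is the star `δ({p})` minus the edges `e(p, r)` with `r ≠ 0`.
-/
open Finset Submodule

section CompleteGraph
variable {V : Type*} [DecidableEq V]

def cutVec (X : Finset V) : V × V → ℝ :=
  fun p => if (p.1 ∈ X ∧ p.2 ∉ X) ∨ (p.2 ∈ X ∧ p.1 ∉ X) then 1 else 0

def edgeVec (e : Sym2 V) : V × V → ℝ :=
  fun p => if s(p.1, p.2) = e then 1 else 0

variable (V) in
def edgeSpan : Submodule ℝ (V × V → ℝ) :=
  span ℝ (Set.range fun e : {e : Sym2 V // ¬e.IsDiag} => edgeVec e.1)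

lemma linearIndependent_edgeVec [Finite V] : LinearIndependent ℝ (edgeVec (V := V)) := by
  have hinj := LinearMap.funLeft_injective_of_surjective ℝ ℝ _ (Sym2.mk_surjective (α := V))
  have h : edgeVec = LinearMap.funLeft ℝ ℝ (Sym2.mk (α := V)).uncurry ∘ Pi.basisFun ℝ (Sym2 V) := by
    funext e ⟨a, b⟩
    simp [edgeVec, Pi.single_apply]
  rw [h]
  exact (Pi.basisFun ℝ (Sym2 V)).linearIndependent.map' _ (LinearMap.ker_eq_bot.2 hinj)

lemma finrank_edgeSpan [Fintype V] :
    Module.finrank ℝ (edgeSpan V) = (Fintype.card V).choose 2 :=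
  (finrank_span_eq_card (linearIndependent_edgeVec.comp _ Subtype.val_injective)).trans
    Sym2.card_subtype_not_diag

lemma edgeVec_eq_single_add_single {x y : V} (h : x ≠ y) :
    edgeVec s(x, y) = Pi.single (x, y) 1 + Pi.single (y, x) 1 := by
  funext ⟨a, b⟩
  by_cases a = x <;> by_cases b = y <;> by_cases a = y <;> by_cases b = x <;> simp_all [edgeVec]

lemma cutVec_eq_sum_edgeVec [Fintype V] (X : Finset V) :
    cutVec X = ∑ x ∈ X, ∑ y ∈ Xᶜ, edgeVec s(x, y) := by
  have hne : ∀ x ∈ X, ∀ y ∈ Xᶜ, x ≠ y := fun x hx y hy => by rintro rfl; simp_all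
  rw [sum_congr rfl fun x hx => sum_congr rfl fun y hy =>
    edgeVec_eq_single_add_single (hne x hx y hy)]
  funext ⟨a, b⟩
  simp only [cutVec, Finset.sum_apply, Pi.add_apply, Pi.single_apply, Prod.mk.injEq, ite_and,
    sum_add_distrib, sum_ite_eq, sum_ite_irrel, sum_const_zero, mem_compl]
  by_cases a ∈ X <;> by_cases b ∈ X <;> simp [*]

@[simp]
lemma cutVec_empty : cutVec (∅ : Finset V) = 0 := by
  funext p
  simp [cutVec]

lemma cutVec_mem_edgeSpan [Fintype V] (X : Finset V) : cutVec X ∈ edgeSpan V := by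
  rw [cutVec_eq_sum_edgeVec]
  refine sum_mem fun x hx => sum_mem fun y hy => subset_span ⟨⟨s(x, y), ?_⟩, rfl⟩
  rintro (rfl : x = y)
  simp_all

lemma cutVec_add_cutVec_sub_cutVec_union_sub_cutVec_inter {A B : Finset V} {p q : V}
    (hA : A \ B = {p}) (hB : B \ A = {q}) :
    cutVec A + cutVec B - cutVec (A ∪ B) - cutVec (A ∩ B) = (2 : ℝ) • edgeVec s(p, q) := by
  have hp : ∀ x, x = p ↔ x ∈ A ∧ x ∉ B := fun x => by rw [← mem_singleton, ← hA, mem_sdiff]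
  have hq : ∀ x, x = q ↔ x ∈ B ∧ x ∉ A := fun x => by rw [← mem_singleton, ← hB, mem_sdiff]
  funext ⟨a, b⟩
  simp only [Pi.add_apply, Pi.sub_apply, Pi.smul_apply, smul_eq_mul, edgeVec, Sym2.eq_iff,
    cutVec, hp, hq, mem_union, mem_inter]
  by_cases a ∈ A <;> by_cases a ∈ B <;> by_cases b ∈ A <;> by_cases b ∈ B <;> simp [*] <;> norm_num

end CompleteGraph

def IsArc (n : ℕ) (X : Finset (ZMod n)) : Prop :=
  ∃ (s : ZMod n) (l : ℕ), 0 < l ∧ l < n ∧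
    X = (Finset.range l).image (fun t : ℕ => s + (t : ZMod n))

def arcCuts (n : ℕ) : Set (ZMod n × ZMod n → ℝ) :=
  {v | ∃ X : Finset (ZMod n), (0 : ZMod n) ∉ X ∧ IsArc n X ∧ v = cutVec X}

section Cycle
variable {n : ℕ} [NeZero n]

def arcIoc (i j : ℕ) : Finset (ZMod n) := {x | i < x.val ∧ x.val ≤ j}

@[simp]
lemma mem_arcIoc {i j : ℕ} {x : ZMod n} : x ∈ arcIoc i j ↔ i < x.val ∧ x.val ≤ j := by
  simp [arcIoc]

lemma isArc_arcIoc {i j : ℕ} (hij : i < j) (hj : j < n) : IsArc n (arcIoc i j) := by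
  refine ⟨((i + 1 : ℕ) : ZMod n), j - i, by omega, by omega, ?_⟩
  ext x
  simp only [mem_arcIoc, mem_image, mem_range]
  constructor
  · rintro ⟨h1, h2⟩
    refine ⟨x.val - (i + 1), by omega, ?_⟩
    rw [← Nat.cast_add, Nat.add_sub_cancel' h1, ZMod.natCast_zmod_val]
  · rintro ⟨t, ht, rfl⟩
    rw [← Nat.cast_add, ZMod.val_cast_of_lt (by omega)]
    omega

lemma cutVec_arcIoc_mem_span {i j : ℕ} (hij : i ≤ j) (hj : j < n) :
    cutVec (arcIoc i j : Finset (ZMod n)) ∈ span ℝ (arcCuts n) := by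
  rcases hij.eq_or_lt with rfl | hlt
  · have : (arcIoc i i : Finset (ZMod n)) = ∅ := by ext x; simp
    rw [this, cutVec_empty]
    exact zero_mem _
  · exact subset_span ⟨_, by simp, isArc_arcIoc hlt hj, rfl⟩

lemma edgeVec_mem_span_arcCuts_of_val_lt {p q : ZMod n} (hp : p ≠ 0) (hpq : p.val < q.val) :
    edgeVec s(p, q) ∈ span ℝ (arcCuts n) := by
  have hp0 : 0 < p.val := (ZMod.val_pos).2 hp
  have hq := ZMod.val_lt q
  have hval : ∀ x y : ZMod n, x = y ↔ x.val = y.val := fun x y => (ZMod.val_injective n).eq_iff.symm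
  set A : Finset (ZMod n) := arcIoc (p.val - 1) (q.val - 1)
  set B : Finset (ZMod n) := arcIoc p.val q.val
  have hA : A \ B = {p} := by ext x; simp [A, B, hval x p]; omega
  have hB : B \ A = {q} := by ext x; simp [A, B, hval x q]; omega
  have hU : A ∪ B = arcIoc (p.val - 1) q.val := by ext x; simp [A, B]; omega
  have hI : A ∩ B = arcIoc p.val (q.val - 1) := by ext x; simp [A, B]; omega
  have h := cutVec_add_cutVec_sub_cutVec_union_sub_cutVec_inter hA hB
  rw [hU, hI] at h
  rw [← inv_smul_smul₀ (two_ne_zero (α := ℝ)) (edgeVec s(p, q)), ← h]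
  refine smul_mem _ _ (sub_mem (sub_mem (add_mem ?_ ?_) ?_) ?_) <;>
    exact cutVec_arcIoc_mem_span (by omega) (by omega)

lemma edgeVec_mem_span_arcCuts_of_ne_zero {p q : ZMod n} (hpq : p ≠ q) (hp : p ≠ 0) (hq : q ≠ 0) :
    edgeVec s(p, q) ∈ span ℝ (arcCuts n) := by
  have hval : p.val ≠ q.val := (ZMod.val_injective n).ne hpq
  rcases hval.lt_or_gt with h | h
  · exact edgeVec_mem_span_arcCuts_of_val_lt hp h
  · rw [Sym2.eq_swap]
    exact edgeVec_mem_span_arcCuts_of_val_lt hq h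

lemma singleton_eq_arcIoc {p : ZMod n} (hp : p ≠ 0) : {p} = arcIoc (p.val - 1) p.val := by
  have hp0 : 0 < p.val := (ZMod.val_pos).2 hp
  ext x
  simp only [mem_singleton, mem_arcIoc, ← (ZMod.val_injective n).eq_iff]
  omega

lemma edgeVec_zero_mem_span_arcCuts {p : ZMod n} (hp : p ≠ 0) :
    edgeVec s(p, 0) ∈ span ℝ (arcCuts n) := by
  have hstar := cutVec_eq_sum_edgeVec ({p} : Finset (ZMod n))
  rw [sum_singleton, compl_singleton, ← add_sum_erase _ _ (mem_erase.2 ⟨hp.symm, mem_univ _⟩)]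
    at hstar
  rw [eq_sub_of_add_eq hstar.symm, singleton_eq_arcIoc hp]
  refine sub_mem (cutVec_arcIoc_mem_span (by omega) (ZMod.val_lt p)) (sum_mem fun r hr => ?_)
  obtain ⟨hr0, hrp⟩ : r ≠ 0 ∧ r ≠ p := by simpa using hr
  exact edgeVec_mem_span_arcCuts_of_ne_zero (Ne.symm hrp) hp hr0

lemma edgeVec_mem_span_arcCuts {e : Sym2 (ZMod n)} (he : ¬e.IsDiag) :
    edgeVec e ∈ span ℝ (arcCuts n) := by
  induction e using Sym2.ind with
  | h p q =>
    have hpq : p ≠ q := by simpa using he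
    by_cases hq : q = 0
    · subst hq
      exact edgeVec_zero_mem_span_arcCuts hpq
    by_cases hp : p = 0
    · subst hp
      rw [Sym2.eq_swap]
      exact edgeVec_zero_mem_span_arcCuts hq
    exact edgeVec_mem_span_arcCuts_of_ne_zero hpq hp hq

lemma span_arcCuts : span ℝ (arcCuts n) = edgeSpan (ZMod n) := by
  apply le_antisymm
  · rw [span_le]
    rintro _ ⟨X, -, -, rfl⟩
    exact cutVec_mem_edgeSpan X
  · rw [edgeSpan, span_le]
    rintro _ ⟨e, rfl⟩
    exact edgeVec_mem_span_arcCuts e.2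

end Cycle

theorem stmt16_general (n : ℕ) [NeZero n] :
    Module.finrank ℝ (Submodule.span ℝ
      {v : ZMod n × ZMod n → ℝ | ∃ X : Finset (ZMod n), (0 : ZMod n) ∉ X ∧
        (∃ (s : ZMod n) (l : ℕ), 0 < l ∧ l < n ∧
          X = (Finset.range l).image (fun t : ℕ => s + (t : ZMod n))) ∧
        v = fun p => if (p.1 ∈ X ∧ p.2 ∉ X) ∨ (p.2 ∈ X ∧ p.1 ∉ X) then 1 else 0}) =
      n.choose 2 := by
  change Module.finrank ℝ (span ℝ (arcCuts n)) = n.choose 2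
  rw [span_arcCuts, finrank_edgeSpan, ZMod.card]

/-- In the complete graph on `ZMod n` (`n ≥ 3`), the characteristic vectors of the cuts whose
shores are the nonempty proper arcs of the `n`-cycle avoiding `0` span a space of dimension
`C(n,2)`. -/
theorem stmt16 (n : ℕ) (hn : 3 ≤ n) [NeZero n] :
    Module.finrank ℝ (Submodule.span ℝ
      {v : ZMod n × ZMod n → ℝ | ∃ X : Finset (ZMod n), (0 : ZMod n) ∉ X ∧
        (∃ (s : ZMod n) (l : ℕ), 0 < l ∧ l < n ∧
          X = (Finset.range l).image (fun t : ℕ => s + (t : ZMod n))) ∧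
        v = fun p => if (p.1 ∈ X ∧ p.2 ∉ X) ∨ (p.2 ∈ X ∧ p.1 ∉ X) then 1 else 0}) =
      n.choose 2 :=
  stmt16_general n
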